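/- arXiv:1903.05270 — 2 statements merged into one kernel-verified Lean document; each statement's English description precedes it below -/
import Mathlib

section
/- The companion poly-Bernoulli polynomials satisfy the forward difference identity C_n^{(k)}(z+1) - C_n^{(k)}(z) = ∑_{l=1}^n C(n,l) z^{n-l} C_{l-1}^{(k-1)}, for k ≥ 2 and n ≥ 1. -/
/-- Generating function `Li_k(1-e^{-t})/(1-e^{-t})` of the poly-Bernoulli numbers,
as a formal power series over `ℚ` (coefficientwise: `∑_{m≥1} (1-e^{-t})^{m-1}/m^k`). -/
noncomputable def pbGF (k : ℕ) : PowerSeries ℚ :=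
  PowerSeries.mk fun n => ∑ m ∈ Finset.range (n + 1),
    ((m + 1 : ℚ) ^ k)⁻¹ *
      PowerSeries.coeff n ((1 - PowerSeries.rescale (-1) (PowerSeries.exp ℚ)) ^ m)

/-- Poly-Bernoulli numbers `B_n^{(k)}`. -/
noncomputable def polyBernoulliNum (k n : ℕ) : ℚ :=
  (Nat.factorial n : ℚ) * PowerSeries.coeff n (pbGF k)

/-- Generating function `Li_k(1-e^{-t})/(e^t-1) = e^{-t}·Li_k(1-e^{-t})/(1-e^{-t})`. -/
noncomputable def cGF (k : ℕ) : PowerSeries ℚ :=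
  PowerSeries.rescale (-1) (PowerSeries.exp ℚ) * pbGF k

/-- Companion poly-Bernoulli numbers `C_n^{(k)}`. -/
noncomputable def polyCNum (k n : ℕ) : ℚ :=
  (Nat.factorial n : ℚ) * PowerSeries.coeff n (cGF k)

/-- Poly-Bernoulli polynomials `B_n^{(k)}(z)` (EGF `e^{zt}·Li_k(1-e^{-t})/(1-e^{-t})`). -/
noncomputable def polyBernoulliPoly (k n : ℕ) (z : ℚ) : ℚ :=
  ∑ j ∈ Finset.range (n + 1), (n.choose j : ℚ) * polyBernoulliNum k j * z ^ (n - j)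

/-- Companion poly-Bernoulli polynomials `C_n^{(k)}(z)` (EGF `e^{zt}·Li_k(1-e^{-t})/(e^t-1)`). -/
noncomputable def polyCPoly (k n : ℕ) (z : ℚ) : ℚ :=
  ∑ j ∈ Finset.range (n + 1), (n.choose j : ℚ) * polyCNum k j * z ^ (n - j)

/-! ### Auxiliary material -/

open PowerSeries

/-- `u = 1 - e^{-t}` as a formal power series. -/
noncomputable def uu : PowerSeries ℚ := 1 - PowerSeries.rescale (-1) (PowerSeries.exp ℚ)

/-- `e^{-t}` as a formal power series. -/
noncomputable def ee : PowerSeries ℚ := PowerSeries.rescale (-1) (PowerSeries.exp ℚ)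

lemma constantCoeff_uu : PowerSeries.constantCoeff uu = 0 := by
  rw [uu, map_sub, map_one, ← PowerSeries.coeff_zero_eq_constantCoeff_apply,
    PowerSeries.coeff_rescale, PowerSeries.coeff_exp]
  norm_num

lemma coeff_uu_pow {n m : ℕ} (h : n < m) : PowerSeries.coeff n (uu ^ m) = 0 := by
  have hd : (PowerSeries.X : PowerSeries ℚ) ^ m ∣ uu ^ m :=
    pow_dvd_pow_of_dvd (PowerSeries.X_dvd_iff.mpr constantCoeff_uu) m
  exact PowerSeries.X_pow_dvd_iff.mp hd n h

lemma derivative_uu : d⁄dX ℚ uu = ee := by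
  have h : d⁄dX ℚ ee = -ee := by
    ext n
    rw [PowerSeries.coeff_derivative]
    simp only [ee, map_neg, PowerSeries.coeff_rescale, PowerSeries.coeff_exp]
    rw [Nat.factorial_succ, pow_succ]
    push_cast
    have h1 : (n.factorial : ℚ) ≠ 0 := by exact_mod_cast n.factorial_ne_zero
    have h2 : ((n : ℚ) + 1) ≠ 0 := by positivity
    field_simp
  have huu : uu = 1 - ee := rfl
  rw [huu, map_sub, h]
  simp

lemma coeff_pbGF (k n N : ℕ) (hN : n < N) :
    PowerSeries.coeff n (pbGF k) =
      ∑ m ∈ Finset.range N, ((m + 1 : ℚ) ^ k)⁻¹ * PowerSeries.coeff n (uu ^ m) := by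
  rw [pbGF, PowerSeries.coeff_mk]
  rw [show (1 - PowerSeries.rescale (-1) (PowerSeries.exp ℚ)) = uu from rfl]
  exact Finset.sum_subset (Finset.range_subset_range.mpr hN) fun m _ hm => by
    rw [coeff_uu_pow (by simpa using Nat.lt_of_succ_le (Nat.not_lt.mp (by simpa using hm))),
      mul_zero]

lemma coeff_mul_pbGF (k n : ℕ) (f : PowerSeries ℚ) :
    PowerSeries.coeff n (f * pbGF k) =
      ∑ m ∈ Finset.range (n + 1), ((m + 1 : ℚ) ^ k)⁻¹ * PowerSeries.coeff n (f * uu ^ m) := by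
  rw [PowerSeries.coeff_mul]
  have h : ∀ p ∈ Finset.HasAntidiagonal.antidiagonal n,
      PowerSeries.coeff p.1 f * PowerSeries.coeff p.2 (pbGF k) =
      ∑ m ∈ Finset.range (n + 1), ((m + 1 : ℚ) ^ k)⁻¹ *
        (PowerSeries.coeff p.1 f * PowerSeries.coeff p.2 (uu ^ m)) := by
    intro p hp
    have hp2 : p.2 < n + 1 := by
      have := Finset.HasAntidiagonal.mem_antidiagonal.mp hp; omega
    rw [coeff_pbGF k p.2 (n + 1) hp2, Finset.mul_sum]
    exact Finset.sum_congr rfl fun m _ => by ring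
  rw [Finset.sum_congr rfl h, Finset.sum_comm]
  exact Finset.sum_congr rfl fun m _ => by rw [← Finset.mul_sum, PowerSeries.coeff_mul]

/-- Key derivative identity: `d/dt ((1-e^{-t})·pbGF k) = e^{-t}·pbGF (k-1)`. -/
lemma deriv_key (k : ℕ) (hk : 1 ≤ k) :
    d⁄dX ℚ (uu * pbGF k) = ee * pbGF (k - 1) := by
  ext n
  rw [PowerSeries.coeff_derivative, coeff_mul_pbGF k (n + 1) uu, coeff_mul_pbGF (k - 1) n ee]
  rw [Finset.sum_range_succ]
  have hz : PowerSeries.coeff (n + 1) (uu * uu ^ (n + 1)) = 0 := by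
    rw [← pow_succ']
    exact coeff_uu_pow (by omega)
  rw [hz, mul_zero, add_zero, Finset.sum_mul]
  refine Finset.sum_congr rfl fun m hm => ?_
  have hm1 : ((m : ℚ) + 1) ≠ 0 := by positivity
  have h2 : d⁄dX ℚ (uu ^ (m + 1)) = (m + 1) • (uu ^ m * ee) := by
    rw [Derivation.leibniz_pow, derivative_uu, Nat.add_sub_cancel, smul_eq_mul]
  have hcd : PowerSeries.coeff (n + 1) (uu * uu ^ m) * ((n : ℚ) + 1)
      = ((m : ℚ) + 1) * PowerSeries.coeff n (ee * uu ^ m) := by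
    calc PowerSeries.coeff (n + 1) (uu * uu ^ m) * ((n : ℚ) + 1)
        = PowerSeries.coeff (n + 1) (uu ^ (m + 1)) * ((n : ℚ) + 1) := by rw [← pow_succ']
      _ = PowerSeries.coeff n (d⁄dX ℚ (uu ^ (m + 1))) := by
          rw [PowerSeries.coeff_derivative]
      _ = ((m : ℚ) + 1) * PowerSeries.coeff n (ee * uu ^ m) := by
          rw [h2, map_nsmul, nsmul_eq_mul, mul_comm (uu ^ m) ee]; push_cast; ring
  have hk' : k = (k - 1) + 1 := (Nat.succ_pred_eq_of_pos hk).symm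
  calc (((m : ℚ) + 1) ^ k)⁻¹ * PowerSeries.coeff (n + 1) (uu * uu ^ m) * ((n : ℕ) + 1 : ℚ)
      = (((m : ℚ) + 1) ^ k)⁻¹ * (PowerSeries.coeff (n + 1) (uu * uu ^ m) * ((n : ℚ) + 1)) := by
        push_cast; ring
    _ = (((m : ℚ) + 1) ^ k)⁻¹ * (((m : ℚ) + 1) * PowerSeries.coeff n (ee * uu ^ m)) := by
        rw [hcd]
    _ = (((m : ℚ) + 1) ^ (k - 1))⁻¹ * PowerSeries.coeff n (ee * uu ^ m) := by
        conv_lhs => rw [hk']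
        rw [pow_succ, mul_inv, mul_assoc, inv_mul_cancel_left₀ hm1]

/-- Expansion of `n!·[t^n](e^{zt}·f)` as a binomial sum. -/
lemma egf_sum (f : PowerSeries ℚ) (z : ℚ) (n : ℕ) :
    (n.factorial : ℚ) * PowerSeries.coeff n (PowerSeries.rescale z (PowerSeries.exp ℚ) * f) =
      ∑ j ∈ Finset.range (n + 1),
        (n.choose j : ℚ) * ((j.factorial : ℚ) * PowerSeries.coeff j f) * z ^ (n - j) := by
  rw [PowerSeries.coeff_mul, Finset.Nat.sum_antidiagonal_eq_sum_range_succ_mk, Finset.mul_sum,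
    ← Finset.sum_range_reflect]
  refine Finset.sum_congr rfl fun i hi => ?_
  have hi' : i ≤ n := Nat.lt_succ_iff.mp (Finset.mem_range.mp hi)
  simp only [Nat.succ_sub_one, Nat.add_sub_cancel]
  rw [PowerSeries.coeff_rescale, PowerSeries.coeff_exp, Nat.sub_sub_self hi']
  have hfac : (n.choose i : ℚ) * (i.factorial : ℚ) * ((n - i).factorial : ℚ)
      = (n.factorial : ℚ) := by
    exact_mod_cast Nat.choose_mul_factorial_mul_factorial hi'
  have h1 : ((n - i).factorial : ℚ) ≠ 0 := by exact_mod_cast (n - i).factorial_ne_zero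
  have halg : (algebraMap ℚ ℚ) (1 / ((n - i).factorial : ℚ)) = 1 / ((n - i).factorial : ℚ) := rfl
  rw [halg]
  field_simp
  linear_combination (-(z ^ (n - i)) * PowerSeries.coeff i f) * hfac

/-- Forward difference identity:
`C_n^{(k)}(z+1) - C_n^{(k)}(z) = ∑_{l=1}^n C(n,l) z^{n-l} C_{l-1}^{(k-1)}`
for `k ≥ 2`, `n ≥ 1`. -/
theorem polyCPoly_difference (k : ℕ) (hk : 2 ≤ k) (n : ℕ) (hn : 1 ≤ n) (z : ℚ) :
    polyCPoly k n (z + 1) - polyCPoly k n z =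
      ∑ l ∈ Finset.Icc 1 n, (n.choose l : ℚ) * z ^ (n - l) * polyCNum (k - 1) (l - 1) := by
  have hk1 : 1 ≤ k := le_trans one_le_two hk
  set g : PowerSeries ℚ := uu * pbGF k with hg
  have hpoly : ∀ w : ℚ, polyCPoly k n w =
      (n.factorial : ℚ) *
        PowerSeries.coeff n (PowerSeries.rescale w (PowerSeries.exp ℚ) * cGF k) := by
    intro w
    rw [egf_sum (cGF k) w n, polyCPoly]
    exact Finset.sum_congr rfl fun j _ => by rw [polyCNum]
  have hexp_ee : PowerSeries.exp ℚ * ee = 1 := by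
    have h1 := PowerSeries.exp_mul_exp_eq_exp_add (1 : ℚ) (-1)
    rw [PowerSeries.rescale_one] at h1
    norm_num at h1
    rw [ee]
    exact h1
  have key : PowerSeries.rescale (z + 1) (PowerSeries.exp ℚ) * cGF k
      - PowerSeries.rescale z (PowerSeries.exp ℚ) * cGF k
      = PowerSeries.rescale z (PowerSeries.exp ℚ) * g := by
    rw [← sub_mul]
    have hre : PowerSeries.rescale (z + 1) (PowerSeries.exp ℚ)
        - PowerSeries.rescale z (PowerSeries.exp ℚ)
        = PowerSeries.rescale z (PowerSeries.exp ℚ) * (PowerSeries.exp ℚ - 1) := by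
      rw [mul_sub, mul_one]
      congr 1
      calc PowerSeries.rescale (z + 1) (PowerSeries.exp ℚ)
          = PowerSeries.rescale z (PowerSeries.exp ℚ)
              * PowerSeries.rescale 1 (PowerSeries.exp ℚ) :=
            (PowerSeries.exp_mul_exp_eq_exp_add z 1).symm
        _ = PowerSeries.rescale z (PowerSeries.exp ℚ) * PowerSeries.exp ℚ := by
            rw [PowerSeries.rescale_one]; rfl
    rw [hre, mul_assoc]
    congr 1
    rw [cGF, hg, show PowerSeries.rescale (-1) (PowerSeries.exp ℚ) = ee from rfl, ← mul_assoc]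
    congr 1
    rw [sub_mul, one_mul, hexp_ee, ee, uu]
  have hg0 : PowerSeries.coeff 0 g = 0 := by
    rw [PowerSeries.coeff_zero_eq_constantCoeff_apply, hg, map_mul, constantCoeff_uu, zero_mul]
  have hgj : ∀ j, 1 ≤ j →
      (j.factorial : ℚ) * PowerSeries.coeff j g = polyCNum (k - 1) (j - 1) := by
    intro j hj
    obtain ⟨i, rfl⟩ : ∃ i, j = i + 1 := ⟨j - 1, by omega⟩
    have hdk : d⁄dX ℚ g = cGF (k - 1) := by
      rw [hg, deriv_key k hk1, cGF, ee]
    have hd : PowerSeries.coeff i (d⁄dX ℚ g) = PowerSeries.coeff (i + 1) g * ((i : ℚ) + 1) := by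
      rw [PowerSeries.coeff_derivative]
      try norm_cast
    rw [polyCNum, Nat.add_sub_cancel, ← hdk, hd, Nat.factorial_succ]
    push_cast
    ring
  rw [hpoly (z + 1), hpoly z, ← mul_sub, ← map_sub, key, egf_sum g z n]
  have hsub : Finset.Icc 1 n ⊆ Finset.range (n + 1) := fun x hx => by
    have := Finset.mem_Icc.mp hx
    exact Finset.mem_range.mpr (by omega)
  have hstep : ∑ j ∈ Finset.range (n + 1),
        (n.choose j : ℚ) * ((j.factorial : ℚ) * PowerSeries.coeff j g) * z ^ (n - j)
      = ∑ j ∈ Finset.Icc 1 n,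
        (n.choose j : ℚ) * ((j.factorial : ℚ) * PowerSeries.coeff j g) * z ^ (n - j) := by
    symm
    apply Finset.sum_subset hsub
    intro x hx hx'
    have hx0 : x = 0 := by
      have h1 := Finset.mem_range.mp hx
      simp only [Finset.mem_Icc, not_and, not_le] at hx'
      omega
    subst hx0
    simp [hg0]
  rw [hstep]
  refine Finset.sum_congr rfl fun j hj => ?_
  rw [hgj j (Finset.mem_Icc.mp hj).1]
  ring
end

section
/- The poly-Bernoulli polynomials satisfy the higher-order difference identity: for any positive integer m, B_n^{(k)}(z+m) - B_n^{(k)}(z) = ∑_{l=1}^n C(n,l) B_{l-1}^{(k-1)}(-1) · (B_{n-l+1}(m+z+1) - B_{n-l+1}(z+1))/(n-l+1), for k ≥ 2 and n ≥ 1. -/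
/-! ### Auxiliary power-series lemmas -/

section Aux
open PowerSeries Finset

/-- `e^{-t}` as a power series. -/
noncomputable def Eser : PowerSeries ℚ := PowerSeries.rescale (-1) (PowerSeries.exp ℚ)

/-- `1 - e^{-t}` as a power series. -/
noncomputable def useries : PowerSeries ℚ := 1 - Eser

lemma coeff_Eser (n : ℕ) : PowerSeries.coeff n Eser = (-1)^n / n.factorial := by
  simp [Eser, PowerSeries.coeff_rescale, PowerSeries.coeff_exp, div_eq_mul_inv]

lemma constCoeff_useries : PowerSeries.constantCoeff useries = 0 := by
  have h := coeff_Eser 0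
  rw [← PowerSeries.coeff_zero_eq_constantCoeff_apply]
  simp only [useries, map_sub, h]
  norm_num

lemma coeff_useries_pow {n m : ℕ} (h : n < m) : PowerSeries.coeff n (useries ^ m) = 0 := by
  have hX : (PowerSeries.X : PowerSeries ℚ) ∣ useries := PowerSeries.X_dvd_iff.2 constCoeff_useries
  have : (PowerSeries.X : PowerSeries ℚ)^m ∣ useries ^ m := pow_dvd_pow_of_dvd hX m
  exact (PowerSeries.X_pow_dvd_iff.1 this) n h

/-- Partial sums of the polylogarithm series. -/
noncomputable def Sser (k N : ℕ) : PowerSeries ℚ :=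
  ∑ m ∈ Finset.range N, ((m + 1 : ℚ) ^ k)⁻¹ • useries ^ m

lemma coeff_Sser (k N n : ℕ) : PowerSeries.coeff n (Sser k N) =
    ∑ m ∈ Finset.range N, ((m + 1 : ℚ) ^ k)⁻¹ * PowerSeries.coeff n (useries ^ m) := by
  simp [Sser]

lemma coeff_pbGF_eq (k N n : ℕ) (h : n < N) :
    PowerSeries.coeff n (pbGF k) = PowerSeries.coeff n (Sser k N) := by
  rw [coeff_Sser, pbGF, PowerSeries.coeff_mk]
  have hsub : Finset.range (n+1) ⊆ Finset.range N := Finset.range_subset_range.2 h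
  rw [Finset.sum_subset hsub]
  · rfl
  · intro m hm hm'
    simp only [Finset.mem_range, not_lt] at hm'
    rw [show (1 - PowerSeries.rescale (-1) (PowerSeries.exp ℚ)) = useries from rfl,
      coeff_useries_pow (lt_of_lt_of_le (Nat.lt_of_succ_le hm') (le_refl m)), mul_zero]

lemma coeff_mul_stable (f g g' : PowerSeries ℚ) (n : ℕ)
    (h : ∀ j ≤ n, PowerSeries.coeff j g = PowerSeries.coeff j g') :
    PowerSeries.coeff n (f * g) = PowerSeries.coeff n (f * g') := by
  rw [PowerSeries.coeff_mul, PowerSeries.coeff_mul]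
  apply Finset.sum_congr rfl
  intro p hp
  rw [Finset.HasAntidiagonal.mem_antidiagonal] at hp
  rw [h p.2 (by omega)]

lemma deriv_Eser : d⁄dX ℚ Eser = -Eser := by
  ext n
  rw [PowerSeries.coeff_derivative, coeff_Eser, map_neg, coeff_Eser]
  rw [Nat.factorial_succ]
  have h1 : ((n.factorial : ℚ)) ≠ 0 := Nat.cast_ne_zero.2 n.factorial_ne_zero
  have h2 : ((n:ℚ) + 1) ≠ 0 := by positivity
  field_simp
  push_cast
  ring

lemma deriv_useries : d⁄dX ℚ useries = Eser := by
  rw [useries, map_sub, deriv_Eser]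
  simp

lemma deriv_useries_pow (m : ℕ) :
    d⁄dX ℚ (useries ^ (m+1)) = PowerSeries.C (m+1 : ℚ) * (useries ^ m * Eser) := by
  rw [Derivation.leibniz_pow, deriv_useries]
  simp only [Nat.succ_sub_one, nsmul_eq_mul, map_add, map_one, map_natCast, smul_eq_mul,
    Nat.cast_add, Nat.cast_one]
  try ring

lemma coeff_deriv_pow (m n : ℕ) :
    ((n:ℚ)+1) * PowerSeries.coeff (n+1) (useries ^ (m+1)) =
      ((m:ℚ)+1) * PowerSeries.coeff n (Eser * useries ^ m) := by
  have h := congrArg (PowerSeries.coeff n) (deriv_useries_pow m)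
  rw [PowerSeries.coeff_derivative] at h
  rw [mul_comm ((n:ℚ)+1), h, PowerSeries.coeff_C_mul, mul_comm Eser]

lemma key_coeff (k : ℕ) (hk : 1 ≤ k) (n : ℕ) :
    ((n:ℚ)+1) * PowerSeries.coeff (n+1) (useries * pbGF k) =
      PowerSeries.coeff n (cGF (k-1)) := by
  have hL : PowerSeries.coeff (n+1) (useries * pbGF k)
      = PowerSeries.coeff (n+1) (useries * Sser k (n+2)) :=
    coeff_mul_stable _ _ _ _ (fun j hj => coeff_pbGF_eq k (n+2) j (by omega))
  have hR : PowerSeries.coeff n (cGF (k-1))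
      = PowerSeries.coeff n (Eser * Sser (k-1) (n+2)) := by
    rw [cGF]
    exact coeff_mul_stable _ _ _ _ (fun j hj => coeff_pbGF_eq (k-1) (n+2) j (by omega))
  rw [hL, hR]
  have hmulS : ∀ (g : PowerSeries ℚ) (k' N : ℕ), g * Sser k' N
      = ∑ m ∈ Finset.range N, ((m + 1 : ℚ) ^ k')⁻¹ • (g * useries ^ m) := by
    intro g k' N
    rw [Sser, Finset.mul_sum]
    exact Finset.sum_congr rfl fun m _ => (mul_smul_comm _ _ _)
  rw [hmulS, hmulS, map_sum, map_sum, Finset.mul_sum]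
  apply Finset.sum_congr rfl
  intro m _
  rw [map_smul, map_smul, smul_eq_mul, smul_eq_mul, ← mul_assoc, mul_comm ((n:ℚ)+1),
    mul_assoc]
  have hu : useries * useries ^ m = useries ^ (m+1) := (pow_succ' useries m).symm
  rw [hu, coeff_deriv_pow m n, ← mul_assoc]
  congr 1
  have hm1 : ((m:ℚ)+1) ≠ 0 := by positivity
  have : ((m:ℚ) + 1) ^ k = ((m:ℚ)+1)^(k-1) * ((m:ℚ)+1) := by
    rw [← pow_succ]
    congr 1
    omega
  rw [this, mul_inv]
  field_simp

lemma egf_expand (w : ℚ) (f : PowerSeries ℚ) (n : ℕ) :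
    (n.factorial : ℚ) * PowerSeries.coeff n (PowerSeries.rescale w (PowerSeries.exp ℚ) * f) =
    ∑ l ∈ Finset.range (n+1), (n.choose l : ℚ) *
      ((l.factorial : ℚ) * PowerSeries.coeff l f) * w ^ (n - l) := by
  rw [mul_comm (PowerSeries.rescale w (PowerSeries.exp ℚ)) f, PowerSeries.coeff_mul,
    Finset.Nat.sum_antidiagonal_eq_sum_range_succ_mk, Finset.mul_sum]
  apply Finset.sum_congr rfl
  intro l hl
  rw [Finset.mem_range] at hl
  have hl' : l ≤ n := by omega
  rw [PowerSeries.coeff_rescale, PowerSeries.coeff_exp]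
  have hfac : ((n-l).factorial : ℚ) ≠ 0 := Nat.cast_ne_zero.2 (Nat.factorial_ne_zero _)
  have hch : (n.choose l : ℚ) * l.factorial * (n-l).factorial = n.factorial := by
    exact_mod_cast Nat.choose_mul_factorial_mul_factorial hl'
  rw [← hch]
  have : algebraMap ℚ ℚ (1 / ((n-l).factorial : ℚ)) = 1 / ((n-l).factorial : ℚ) := by
    simp
  rw [this]
  field_simp

lemma polyBernoulliPoly_eq_coeff (k n : ℕ) (z : ℚ) :
    polyBernoulliPoly k n z = (n.factorial : ℚ) *
      PowerSeries.coeff n (PowerSeries.rescale z (PowerSeries.exp ℚ) * pbGF k) := by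
  rw [egf_expand, polyBernoulliPoly]
  apply Finset.sum_congr rfl
  intro j _
  rw [polyBernoulliNum]

lemma polyBernoulliPoly_neg_one (k j : ℕ) :
    polyBernoulliPoly k j (-1) = polyCNum k j := by
  rw [polyBernoulliPoly_eq_coeff, polyCNum, cGF]

lemma fact_coeff_F (k : ℕ) (hk : 2 ≤ k) (l : ℕ) (hl : 1 ≤ l) :
    (l.factorial : ℚ) * PowerSeries.coeff l (useries * pbGF k) =
      polyBernoulliPoly (k-1) (l-1) (-1) := by
  obtain ⟨p, rfl⟩ : ∃ p, l = p + 1 := ⟨l - 1, by omega⟩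
  rw [polyBernoulliPoly_neg_one, polyCNum]
  have h := key_coeff k (by omega) p
  rw [Nat.add_sub_cancel, ← h, Nat.factorial_succ]
  push_cast
  ring

/-- Single-step difference identity. -/
lemma diff_one (k : ℕ) (hk : 2 ≤ k) (n : ℕ) (z : ℚ) :
    polyBernoulliPoly k n (z + 1) - polyBernoulliPoly k n z =
      ∑ l ∈ Finset.Icc 1 n, (n.choose l : ℚ) * polyBernoulliPoly (k-1) (l-1) (-1)
        * (z+1) ^ (n-l) := by
  have hser : PowerSeries.rescale (z+1) (PowerSeries.exp ℚ)
        - PowerSeries.rescale z (PowerSeries.exp ℚ)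
      = PowerSeries.rescale (z+1) (PowerSeries.exp ℚ) * useries := by
    rw [useries, mul_sub, mul_one, Eser, PowerSeries.exp_mul_exp_eq_exp_add]
    norm_num
  have hL : polyBernoulliPoly k n (z + 1) - polyBernoulliPoly k n z
      = (n.factorial : ℚ) * PowerSeries.coeff n
          (PowerSeries.rescale (z+1) (PowerSeries.exp ℚ) * (useries * pbGF k)) := by
    rw [polyBernoulliPoly_eq_coeff, polyBernoulliPoly_eq_coeff, ← mul_sub, ← map_sub,
      ← sub_mul, hser, mul_assoc]
  rw [hL, egf_expand]
  rw [Finset.range_eq_Ico, Finset.sum_eq_sum_Ico_succ_bot (by omega : 0 < n+1)]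
  have h0 : PowerSeries.coeff 0 (useries * pbGF k) = 0 := by
    rw [PowerSeries.coeff_zero_eq_constantCoeff_apply, map_mul, constCoeff_useries, zero_mul]
  rw [h0, Finset.Ico_add_one_right_eq_Icc]
  simp only [mul_zero, zero_mul, mul_one, zero_add]
  refine Finset.sum_congr rfl fun l hl => ?_
  rw [Finset.mem_Icc] at hl
  rw [fact_coeff_F k hk l hl.1]

end Aux

lemma bern_sum (p : ℕ) (x : ℚ) (m : ℕ) :
    Polynomial.eval ((m:ℚ) + x) (Polynomial.bernoulli (p+1)) -
      Polynomial.eval x (Polynomial.bernoulli (p+1))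
    = ((p:ℚ)+1) * ∑ i ∈ Finset.range m, (x + i)^p := by
  induction m with
  | zero => simp
  | succ m ih =>
    have harg : ((m+1:ℕ):ℚ) + x = 1 + ((m:ℚ) + x) := by push_cast; ring
    rw [harg, Polynomial.bernoulli_eval_one_add, Finset.sum_range_succ, mul_add]
    rw [Nat.add_sub_cancel]
    push_cast
    rw [← ih]
    ring

lemma diff_m (k : ℕ) (hk : 2 ≤ k) (n : ℕ) (m : ℕ) (z : ℚ) :
    polyBernoulliPoly k n (z + m) - polyBernoulliPoly k n z =
      ∑ l ∈ Finset.Icc 1 n, (n.choose l : ℚ) * polyBernoulliPoly (k-1) (l-1) (-1)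
        * ∑ i ∈ Finset.range m, (z + 1 + i)^(n-l) := by
  induction m with
  | zero => simp
  | succ m ih =>
    have harg : z + ((m+1:ℕ):ℚ) = (z + (m:ℚ)) + 1 := by push_cast; ring
    have step := diff_one k hk n (z + (m:ℚ))
    have : polyBernoulliPoly k n (z + ((m+1:ℕ):ℚ)) - polyBernoulliPoly k n z =
        (polyBernoulliPoly k n ((z + (m:ℚ)) + 1) - polyBernoulliPoly k n (z + (m:ℚ)))
        + (polyBernoulliPoly k n (z + (m:ℚ)) - polyBernoulliPoly k n z) := by
      rw [harg]; ring
    rw [this, step, ih, ← Finset.sum_add_distrib]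
    refine Finset.sum_congr rfl fun l _ => ?_
    rw [Finset.sum_range_succ, mul_add]
    ring_nf

/-- Higher-order difference identity: for `m ≥ 1`, `k ≥ 2`, `n ≥ 1`,
`B_n^{(k)}(z+m) - B_n^{(k)}(z)
  = ∑_{l=1}^n C(n,l) B_{l-1}^{(k-1)}(-1)·(B_{n-l+1}(m+z+1) - B_{n-l+1}(z+1))/(n-l+1)`. -/
theorem polyBernoulliPoly_higher_difference (k : ℕ) (hk : 2 ≤ k) (n : ℕ) (hn : 1 ≤ n)
    (m : ℕ) (hm : 1 ≤ m) (z : ℚ) :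
    polyBernoulliPoly k n (z + m) - polyBernoulliPoly k n z =
      ∑ l ∈ Finset.Icc 1 n, (n.choose l : ℚ) * polyBernoulliPoly (k - 1) (l - 1) (-1) *
        ((Polynomial.eval ((m : ℚ) + z + 1) (Polynomial.bernoulli (n - l + 1)) -
          Polynomial.eval (z + 1) (Polynomial.bernoulli (n - l + 1))) / ((n - l + 1 : ℕ) : ℚ)) := by
  rw [diff_m k hk n m z]
  refine Finset.sum_congr rfl fun l _ => ?_
  congr 1
  have hb := bern_sum (n - l) (z + 1) m
  have harg : (m:ℚ) + z + 1 = (m:ℚ) + (z + 1) := by ring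
  have hden : (((n - l + 1 : ℕ)) : ℚ) = ((n-l : ℕ):ℚ) + 1 := by push_cast; ring
  have hne : ((n-l : ℕ):ℚ) + 1 ≠ 0 := by positivity
  rw [harg, hb, hden]
  field_simp
end
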